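/- Let β ∈ (0,1) be a real number, n ≥ 1 and N natural numbers, x : Fin n → Fin N → Bool the experts' predictions, c : Fin N → Bool the correct labels, and r : Fin N → Fin 3 a routing function assigning each trial to one of three learners. For expert i, learner j, and time t ≤ N, let mist j i t denote the number of trials s < t with r s = j and x i s ≠ c s, let w j i t = β^(mist j i t), let W j t = ∑_{i} w j i t, and for a trial t let F t = (∑_{i : x i t ≠ c t} w (r t) i t) / W (r t) t be the fraction of the responsible learner's weight on the wrong answer at trial t. Then for any choice of experts k_1, k_2, k_3, ∑_{t < N} F t ≤ ((mist 1 k_1 N + mist 2 k_2 N + mist 3 k_3 N) * ln(1/β) + 3 * ln n) / (1 - β). -/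

import Mathlib

/-!
Track the potential `Φ t = ∑ⱼ log Wⱼ(t)`. On trial `t` only the responsible learner `j = r t`
changes: its wrong experts are multiplied by `β`, so `Wⱼ(t+1) = Wⱼ(t) (1 - (1 - β) F t)` and
`1 - x⁻¹ ≤ log x` gives `(1 - β) F t ≤ Φ t - Φ (t+1)`. Telescoping, `(1 - β) ∑ F ≤ Φ 0 - Φ N`,
where `Φ 0 = 3 log n` and `Φ N ≥ ∑ⱼ mistⱼ(kⱼ) log β` because `Wⱼ(N)` dominates the weight of `kⱼ`.
-/

/-- Number of mistakes expert `i` made on the trials routed to learner `j`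
among the first `t` trials. -/
def mist {n N : ℕ} (x : Fin n → Fin N → Bool) (c : Fin N → Bool)
    (r : Fin N → Fin 3) (j : Fin 3) (i : Fin n) (t : ℕ) : ℕ :=
  (Finset.univ.filter (fun s : Fin N => (s : ℕ) < t ∧ r s = j ∧ x i s ≠ c s)).card

/-- Weight of expert `i` in learner `j` just before trial `t`. -/
noncomputable def w (β : ℝ) {n N : ℕ} (x : Fin n → Fin N → Bool) (c : Fin N → Bool)
    (r : Fin N → Fin 3) (j : Fin 3) (i : Fin n) (t : ℕ) : ℝ :=
  β ^ (mist x c r j i t)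

/-- Total weight of learner `j` just before trial `t`. -/
noncomputable def W (β : ℝ) {n N : ℕ} (x : Fin n → Fin N → Bool) (c : Fin N → Bool)
    (r : Fin N → Fin 3) (j : Fin 3) (t : ℕ) : ℝ :=
  ∑ i : Fin n, w β x c r j i t

/-- Fraction of the responsible learner's total weight placed on the wrong
answer at trial `t`. -/
noncomputable def F (β : ℝ) {n N : ℕ} (x : Fin n → Fin N → Bool) (c : Fin N → Bool)
    (r : Fin N → Fin 3) (t : Fin N) : ℝ :=
  (∑ i ∈ Finset.univ.filter (fun i : Fin n => x i t ≠ c t), w β x c r (r t) i (t : ℕ)) /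
    W β x c r (r t) (t : ℕ)

open Finset Real

noncomputable def logPotential (β : ℝ) {n N : ℕ} (x : Fin n → Fin N → Bool) (c : Fin N → Bool)
    (r : Fin N → Fin 3) (t : ℕ) : ℝ :=
  ∑ j, log (W β x c r j t)

section

variable {β : ℝ} {n N : ℕ} {x : Fin n → Fin N → Bool} {c : Fin N → Bool} {r : Fin N → Fin 3}

lemma mist_zero (j : Fin 3) (i : Fin n) : mist x c r j i 0 = 0 := by
  simp [mist]

lemma mist_succ (j : Fin 3) (i : Fin n) (t : Fin N) :
    mist x c r j i (t + 1) = mist x c r j i t + if r t = j ∧ x i t ≠ c t then 1 else 0 := by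
  simp only [mist, card_filter]
  rw [← Fintype.sum_ite_eq' t (fun s => if r s = j ∧ x i s ≠ c s then 1 else 0),
    ← sum_add_distrib]
  refine sum_congr rfl fun s _ => ?_
  have : (s : ℕ) < t + 1 ↔ (s : ℕ) < t ∨ s = t := by rw [Nat.lt_succ_iff_lt_or_eq, Fin.val_inj]
  by_cases hst : s = t <;> simp [this, hst]

lemma w_pos (hβ0 : 0 < β) (j : Fin 3) (i : Fin n) (t : ℕ) : 0 < w β x c r j i t :=
  pow_pos hβ0 _

lemma W_pos [Nonempty (Fin n)] (hβ0 : 0 < β) (j : Fin 3) (t : ℕ) : 0 < W β x c r j t :=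
  sum_pos (fun i _ => w_pos hβ0 j i t) univ_nonempty

lemma W_zero (j : Fin 3) : W β x c r j 0 = n := by
  simp [W, w, mist_zero]

lemma W_succ_of_ne {j : Fin 3} {t : Fin N} (hj : r t ≠ j) :
    W β x c r j (t + 1) = W β x c r j t := by
  simp [W, w, mist_succ, hj]

lemma W_succ_self (t : Fin N) :
    W β x c r (r t) (t + 1) = W β x c r (r t) t -
      (1 - β) * ∑ i ∈ univ.filter (fun i => x i t ≠ c t), w β x c r (r t) i t := by
  rw [W, W, mul_sum, sum_filter, ← sum_sub_distrib]
  refine sum_congr rfl fun i _ => ?_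
  by_cases hi : x i t ≠ c t <;> simp [w, mist_succ, hi, pow_succ]; ring

lemma pow_mist_le_W (hβ0 : 0 < β) (j : Fin 3) (k : Fin n) (t : ℕ) :
    β ^ mist x c r j k t ≤ W β x c r j t :=
  single_le_sum (fun i _ => (w_pos hβ0 j i t).le) (mem_univ k)

lemma logPotential_zero : logPotential β x c r 0 = 3 * log n := by
  simp [logPotential, W_zero]

lemma logPotential_sub_succ (t : Fin N) :
    logPotential β x c r t - logPotential β x c r (t + 1) =
      log (W β x c r (r t) t) - log (W β x c r (r t) (t + 1)) := by
  rw [logPotential, logPotential, ← sum_sub_distrib, sum_eq_single (r t)]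
  · intro j _ hj
    rw [W_succ_of_ne (Ne.symm hj), sub_self]
  · simp

lemma mul_F_le_logPotential_sub_succ [Nonempty (Fin n)] (hβ0 : 0 < β) (t : Fin N) :
    (1 - β) * F β x c r t ≤ logPotential β x c r t - logPotential β x c r (t + 1) := by
  have hW : 0 < W β x c r (r t) t := W_pos hβ0 _ _
  have hW' : 0 < W β x c r (r t) (t + 1) := W_pos hβ0 _ _
  have hdrop : 1 - (W β x c r (r t) t / W β x c r (r t) (t + 1))⁻¹ = (1 - β) * F β x c r t := by
    rw [inv_div, one_sub_div hW.ne', F, W_succ_self, sub_sub_cancel, mul_div_assoc]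
  rw [logPotential_sub_succ, ← log_div hW.ne' hW'.ne', ← hdrop]
  exact one_sub_inv_le_log_of_pos (div_pos hW hW')

lemma mul_sum_F_le_logPotential_sub [Nonempty (Fin n)] (hβ0 : 0 < β) :
    (1 - β) * ∑ t, F β x c r t ≤ logPotential β x c r 0 - logPotential β x c r N := by
  rw [mul_sum, ← sum_range_sub', ← Fin.sum_univ_eq_sum_range]
  exact sum_le_sum fun t _ => mul_F_le_logPotential_sub_succ hβ0 t

lemma sum_mist_mul_log_le_logPotential (hβ0 : 0 < β) (k : Fin 3 → Fin n) (t : ℕ) :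
    ∑ j, (mist x c r j (k j) t : ℝ) * log β ≤ logPotential β x c r t := by
  refine sum_le_sum fun j _ => ?_
  rw [← log_pow]
  exact log_le_log (pow_pos hβ0 _) (pow_mist_le_W hβ0 j (k j) t)

end

theorem crwm_mistake_bound_general
    (β : ℝ) (hβ0 : 0 < β) (hβ1 : β < 1)
    (n N : ℕ)
    (x : Fin n → Fin N → Bool) (c : Fin N → Bool)
    (r : Fin N → Fin 3)
    (k₁ k₂ k₃ : Fin n) :
    ∑ t : Fin N, F β x c r t ≤
      (((mist x c r 0 k₁ N : ℝ) + (mist x c r 1 k₂ N : ℝ) + (mist x c r 2 k₃ N : ℝ)) *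
          Real.log (1 / β) + 3 * Real.log n) / (1 - β) := by
  have : Nonempty (Fin n) := ⟨k₁⟩
  have hdecrease : (1 - β) * ∑ t, F β x c r t ≤ 3 * log n - logPotential β x c r N := by
    simpa only [logPotential_zero] using mul_sum_F_le_logPotential_sub hβ0
  have hfinal : ∑ j, (mist x c r j (![k₁, k₂, k₃] j) N : ℝ) * log β ≤ logPotential β x c r N :=
    sum_mist_mul_log_le_logPotential hβ0 _ N
  rw [le_div_iff₀ (by linarith), one_div, log_inv]
  simp only [Fin.sum_univ_three, Matrix.cons_val_zero, Matrix.cons_val_one, Matrix.cons_val_two,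
    Matrix.tail_cons, Matrix.head_cons] at hfinal
  linarith

theorem crwm_mistake_bound
    (β : ℝ) (hβ0 : 0 < β) (hβ1 : β < 1)
    (n N : ℕ) (hn : 1 ≤ n)
    (x : Fin n → Fin N → Bool) (c : Fin N → Bool)
    (r : Fin N → Fin 3)
    (k₁ k₂ k₃ : Fin n) :
    ∑ t : Fin N, F β x c r t ≤
      (((mist x c r 0 k₁ N : ℝ) + (mist x c r 1 k₂ N : ℝ) + (mist x c r 2 k₃ N : ℝ)) *
          Real.log (1 / β) + 3 * Real.log n) / (1 - β) :=
  crwm_mistake_bound_general β hβ0 hβ1 n N x c r k₁ k₂ k₃
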